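/- For the elastic energy E on H, and for all u, φ ∈ H, one has (∇E(u), φ) = 2∫₀¹ u''(x)φ''(x)/(1+u'(x)²)^{5/2} dx − 5∫₀¹ u''(x)² u'(x) φ'(x)/(1+u'(x)²)^{7/2} dx. Moreover, ‖∇E(u)‖ ≤ (1 + (5/2)·C_P)·E(u) + 1, where C_P denotes the operator norm of the embedding W^{2,2}(0,1) ∩ W₀^{1,2}(0,1) ↪ W^{1,∞}(0,1). -/

import Mathlib

open MeasureTheory Set Filter Topology

noncomputable section

/-- Membership in `H = W^{2,2}(0,1) ∩ W₀^{1,2}(0,1)`: `u1` is the (continuous) derivative of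
`u` on `[0,1]`, `u1` is absolutely continuous with (integrable) derivative `u2 ∈ L²(0,1)`,
and `u(0) = u(1) = 0`. -/
def MemH (u u1 u2 : ℝ → ℝ) : Prop :=
  (∀ x ∈ Icc (0:ℝ) 1, HasDerivWithinAt u (u1 x) (Icc 0 1) x) ∧
  (∀ x ∈ Icc (0:ℝ) 1, u1 x = u1 0 + ∫ t in (0:ℝ)..x, u2 t) ∧
  IntegrableOn u2 (Icc (0:ℝ) 1) ∧
  IntegrableOn (fun x => (u2 x) ^ 2) (Icc (0:ℝ) 1) ∧
  u 0 = 0 ∧ u 1 = 0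

/-- Membership in the obstacle set `C = { u ∈ H : u ≥ ψ a.e. }`. -/
def MemC (ψ : ℝ → ℝ) (u u1 u2 : ℝ → ℝ) : Prop :=
  MemH u u1 u2 ∧ ∀ᵐ x ∂(volume.restrict (Icc (0:ℝ) 1)), ψ x ≤ u x

/-- The inner product of `H`: `(u,v) = ∫₀¹ u'' v''` (in terms of the second derivatives). -/
def Hip (u2 v2 : ℝ → ℝ) : ℝ := ∫ x in (0:ℝ)..1, u2 x * v2 x

/-- The norm of `H`: `‖u‖ = (∫₀¹ (u'')²)^{1/2}` (in terms of the second derivative). -/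
def Hnorm (u2 : ℝ → ℝ) : ℝ := Real.sqrt (∫ x in (0:ℝ)..1, (u2 x) ^ 2)

/-- The elastic (Willmore / Euler) bending energy `E(u) = ∫₀¹ u''²/(1+u'²)^{5/2}`. -/
def elE (u1 u2 : ℝ → ℝ) : ℝ :=
  ∫ x in (0:ℝ)..1, (u2 x) ^ 2 / (1 + (u1 x) ^ 2) ^ ((5:ℝ)/2)

/-- The claimed formula for the gradient pairing:
`(∇E(u), φ) = 2∫₀¹ u''φ''/(1+u'²)^{5/2} - 5∫₀¹ u''²u'φ'/(1+u'²)^{7/2}`. -/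
def elDE (u1 u2 φ1 φ2 : ℝ → ℝ) : ℝ :=
  2 * (∫ x in (0:ℝ)..1, u2 x * φ2 x / (1 + (u1 x) ^ 2) ^ ((5:ℝ)/2))
  - 5 * (∫ x in (0:ℝ)..1, (u2 x) ^ 2 * u1 x * φ1 x / (1 + (u1 x) ^ 2) ^ ((7:ℝ)/2))

/-!
Differentiating under the integral sign: along `(u', u'') + ε (φ', φ'')` the derivative of the
density `q² / (1 + p²)^{5/2}` is dominated, for `|ε| ≤ 1`, by `(2 + 5/2 ‖φ'‖_∞) (|u''| + |φ''|)²`,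
which is integrable because `u'', φ'' ∈ L²`. For the estimate, the weight `w = (1 + u'²)^{5/2} ≥ 1`
gives `∫ |u'' φ''| / w ≤ (∫ u''² / w²)^{1/2} ‖φ‖ ≤ E(u)^{1/2} ‖φ‖` by Cauchy–Schwarz, and
`2 E^{1/2} ≤ E + 1`; in the second term `|u'| / (1 + u'²) ≤ 1/2` leaves `‖φ'‖_∞ / 2 · E(u)`,
and `‖φ'‖_∞ ≤ C_P ‖φ‖`.
-/

def elasticDensity (p q : ℝ) : ℝ := q ^ 2 / (1 + p ^ 2) ^ ((5:ℝ)/2)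

def elasticDensityDeriv (p q P Q : ℝ) : ℝ :=
  2 * (q * Q / (1 + p ^ 2) ^ ((5:ℝ)/2)) - 5 * (q ^ 2 * p * P / (1 + p ^ 2) ^ ((7:ℝ)/2))

lemma one_le_one_add_sq_rpow (p : ℝ) {s : ℝ} (hs : 0 ≤ s) : 1 ≤ (1 + p ^ 2) ^ s :=
  Real.one_le_rpow (by nlinarith [sq_nonneg p]) hs

lemma one_add_sq_rpow_pos (p s : ℝ) : 0 < (1 + p ^ 2) ^ s :=
  Real.rpow_pos_of_pos (by positivity) s

lemma elasticDensity_nonneg (p q : ℝ) : 0 ≤ elasticDensity p q :=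
  div_nonneg (sq_nonneg q) (one_add_sq_rpow_pos p _).le

lemma elasticDensity_le_sq (p q : ℝ) : elasticDensity p q ≤ q ^ 2 :=
  div_le_self (sq_nonneg q) (one_le_one_add_sq_rpow p (by norm_num))

lemma hasDerivAt_elasticDensity_line (p q P Q ε : ℝ) :
    HasDerivAt (fun e => elasticDensity (p + e * P) (q + e * Q))
      (elasticDensityDeriv (p + ε * P) (q + ε * Q) P Q) ε := by
  have hpos : ∀ e : ℝ, 0 < 1 + (p + e * P) ^ 2 := fun e => by positivity
  have hnum : HasDerivAt (fun e : ℝ => (q + e * Q) ^ 2) (2 * (q + ε * Q) * Q) ε := by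
    simpa using ((hasDerivAt_mul_const Q).const_add q).fun_pow 2
  have hbase : HasDerivAt (fun e : ℝ => 1 + (p + e * P) ^ 2) (2 * (p + ε * P) * P) ε := by
    simpa using (((hasDerivAt_mul_const P).const_add p).pow 2).const_add 1
  have hden := (Real.hasDerivAt_rpow_const (p := -((5:ℝ)/2)) (Or.inl (hpos ε).ne')).comp ε hbase
  have hfun : (fun e => elasticDensity (p + e * P) (q + e * Q))
      = fun e => (q + e * Q) ^ 2 * (1 + (p + e * P) ^ 2) ^ (-((5:ℝ)/2)) := by
    funext e
    rw [elasticDensity, Real.rpow_neg (hpos e).le, div_eq_mul_inv]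
  rw [hfun]
  refine (hnum.mul hden).congr_deriv ?_
  rw [elasticDensityDeriv, Function.comp_apply, show -((5:ℝ)/2) - 1 = -((7:ℝ)/2) by norm_num,
    Real.rpow_neg (hpos ε).le, Real.rpow_neg (hpos ε).le]
  ring

lemma abs_sq_mul_mul_div_one_add_sq_rpow_le (p q P : ℝ) :
    |q ^ 2 * p * P / (1 + p ^ 2) ^ ((7:ℝ)/2)| ≤ |P| / 2 * elasticDensity p q := by
  have hpos : 0 < 1 + p ^ 2 := by positivity
  have hsplit : (1 + p ^ 2) ^ ((7:ℝ)/2) = (1 + p ^ 2) * (1 + p ^ 2) ^ ((5:ℝ)/2) := by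
    rw [show (7:ℝ)/2 = 1 + 5/2 by norm_num, Real.rpow_add hpos, Real.rpow_one]
  have hp : 2 * |p| ≤ 1 + p ^ 2 := by nlinarith [sq_nonneg (|p| - 1), sq_abs p]
  rw [elasticDensity, abs_div, abs_of_pos (one_add_sq_rpow_pos p _), hsplit, abs_mul, abs_mul,
    abs_of_nonneg (sq_nonneg q), ← div_div, mul_div_assoc', div_le_div_iff_of_pos_right
      (one_add_sq_rpow_pos p _), div_le_iff₀ hpos]
  have := mul_le_mul_of_nonneg_left hp (mul_nonneg (sq_nonneg q) (abs_nonneg P))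
  nlinarith

lemma abs_div_one_add_sq_rpow_le (p q : ℝ) {s : ℝ} (hs : 0 ≤ s) :
    |q / (1 + p ^ 2) ^ s| ≤ |q| := by
  rw [abs_div, abs_of_pos (one_add_sq_rpow_pos p s)]
  exact div_le_self (abs_nonneg q) (one_le_one_add_sq_rpow p hs)

lemma sq_div_one_add_sq_rpow_le_elasticDensity (p q : ℝ) :
    (q / (1 + p ^ 2) ^ ((5:ℝ)/2)) ^ 2 ≤ elasticDensity p q := by
  rw [div_pow, elasticDensity]
  refine div_le_div_of_nonneg_left (sq_nonneg q) (one_add_sq_rpow_pos p _) ?_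
  have h1 := one_le_one_add_sq_rpow p (s := (5:ℝ)/2) (by norm_num)
  nlinarith

lemma abs_elasticDensityDeriv_le (p q P Q : ℝ) :
    |elasticDensityDeriv p q P Q|
      ≤ 2 * |q / (1 + p ^ 2) ^ ((5:ℝ)/2) * Q| + 5 / 2 * |P| * elasticDensity p q := by
  have hsecond := abs_sq_mul_mul_div_one_add_sq_rpow_le p q P
  calc |elasticDensityDeriv p q P Q|
      ≤ |2 * (q * Q / (1 + p ^ 2) ^ ((5:ℝ)/2))|
          + |5 * (q ^ 2 * p * P / (1 + p ^ 2) ^ ((7:ℝ)/2))| := abs_sub _ _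
    _ ≤ _ := by
      rw [abs_mul, abs_mul 5, mul_div_right_comm, abs_two, abs_of_pos (by norm_num : (0:ℝ) < 5)]
      linarith

lemma abs_elasticDensityDeriv_line_le {ε : ℝ} (hε : |ε| ≤ 1) (p q P Q : ℝ) :
    |elasticDensityDeriv (p + ε * P) (q + ε * Q) P Q| ≤ (2 + 5 / 2 * |P|) * (|q| + |Q|) ^ 2 := by
  set r := q + ε * Q
  have hr : |r| ≤ |q| + |Q| := (abs_add_le _ _).trans (by
    rw [abs_mul]; nlinarith [abs_nonneg Q, abs_nonneg ε])
  have hr2 : r ^ 2 ≤ (|q| + |Q|) ^ 2 := by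
    rw [← sq_abs]; exact pow_le_pow_left₀ (abs_nonneg r) hr 2
  have h1 : |r / (1 + (p + ε * P) ^ 2) ^ ((5:ℝ)/2) * Q| ≤ (|q| + |Q|) ^ 2 := by
    rw [abs_mul, sq (|q| + |Q|)]
    exact mul_le_mul ((abs_div_one_add_sq_rpow_le _ r (by norm_num)).trans hr)
      (le_add_of_nonneg_left (abs_nonneg q)) (abs_nonneg Q) (by positivity)
  have h2 : elasticDensity (p + ε * P) r ≤ (|q| + |Q|) ^ 2 := (elasticDensity_le_sq _ _).trans hr2
  calc _ ≤ 2 * |r / (1 + (p + ε * P) ^ 2) ^ ((5:ℝ)/2) * Q|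
        + 5 / 2 * |P| * elasticDensity (p + ε * P) r := abs_elasticDensityDeriv_le _ _ _ _
    _ ≤ 2 * (|q| + |Q|) ^ 2 + 5 / 2 * |P| * (|q| + |Q|) ^ 2 := by gcongr
    _ = _ := by ring

section

variable {α : Type*} [MeasurableSpace α] {μ : Measure α}

lemma integral_abs_mul_le_sqrt_mul_sqrt {f g : α → ℝ} (hf : MemLp f 2 μ) (hg : MemLp g 2 μ) :
    ∫ x, |f x * g x| ∂μ ≤ √(∫ x, f x ^ 2 ∂μ) * √(∫ x, g x ^ 2 ∂μ) := by
  have h := integral_mul_norm_le_Lp_mul_Lq Real.HolderConjugate.two_two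
    (by simpa using hf) (by simpa using hg)
  simpa [Real.norm_eq_abs, abs_mul, Real.sqrt_eq_rpow, sq_abs] using h

lemma AEMeasurable.elasticDensity {p q : α → ℝ} (hp : AEMeasurable p μ) (hq : AEMeasurable q μ) :
    AEMeasurable (fun x => _root_.elasticDensity (p x) (q x)) μ := by
  unfold _root_.elasticDensity; fun_prop

lemma AEMeasurable.elasticDensityDeriv {p q P Q : α → ℝ} (hp : AEMeasurable p μ)
    (hq : AEMeasurable q μ) (hP : AEMeasurable P μ) (hQ : AEMeasurable Q μ) :
    AEMeasurable (fun x => _root_.elasticDensityDeriv (p x) (q x) (P x) (Q x)) μ := by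
  unfold _root_.elasticDensityDeriv; fun_prop

variable {u1 u2 φ1 φ2 : α → ℝ} {M : ℝ}

lemma integrable_elasticDensity (hu1 : AEMeasurable u1 μ) (hu2 : MemLp u2 2 μ) :
    Integrable (fun x => elasticDensity (u1 x) (u2 x)) μ := by
  refine hu2.integrable_sq.mono' (hu1.elasticDensity hu2.aemeasurable).aestronglyMeasurable
    (ae_of_all _ fun x => ?_)
  rw [Real.norm_of_nonneg (elasticDensity_nonneg _ _)]
  exact elasticDensity_le_sq _ _

lemma hasDerivAt_integral_elasticDensity (hu1 : AEMeasurable u1 μ) (hφ1 : AEMeasurable φ1 μ)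
    (hu2 : MemLp u2 2 μ) (hφ2 : MemLp φ2 2 μ) (hM : ∀ᵐ x ∂μ, |φ1 x| ≤ M) :
    HasDerivAt (fun ε => ∫ x, elasticDensity (u1 x + ε * φ1 x) (u2 x + ε * φ2 x) ∂μ)
      (∫ x, elasticDensityDeriv (u1 x) (u2 x) (φ1 x) (φ2 x) ∂μ) 0 := by
  have hmeas : ∀ ε : ℝ, AEStronglyMeasurable
      (fun x => elasticDensity (u1 x + ε * φ1 x) (u2 x + ε * φ2 x)) μ := fun ε =>
    ((hu1.add (hφ1.const_mul ε)).elasticDensity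
      (hu2.aemeasurable.add (hφ2.aemeasurable.const_mul ε))).aestronglyMeasurable
  have hbound : ∀ᵐ x ∂μ, ∀ ε ∈ Metric.ball (0:ℝ) 1,
      ‖elasticDensityDeriv (u1 x + ε * φ1 x) (u2 x + ε * φ2 x) (φ1 x) (φ2 x)‖
        ≤ (2 + 5 / 2 * M) * (|u2 x| + |φ2 x|) ^ 2 := by
    filter_upwards [hM] with x hx ε hε
    rw [Real.norm_eq_abs]
    refine (abs_elasticDensityDeriv_line_le ?_ _ _ _ _).trans ?_
    · simpa using (mem_ball_zero_iff.mp hε).le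
    · gcongr
  have hderiv := hasDerivAt_integral_of_dominated_loc_of_deriv_le (Metric.ball_mem_nhds 0 one_pos)
    (Eventually.of_forall hmeas) (by simpa using integrable_elasticDensity hu1 hu2)
    (by simpa using
      (hu1.elasticDensityDeriv hu2.aemeasurable hφ1 hφ2.aemeasurable).aestronglyMeasurable)
    hbound ((hu2.abs.add hφ2.abs).integrable_sq.const_mul _)
    (ae_of_all _ fun x ε _ => hasDerivAt_elasticDensity_line _ _ _ _ ε)
  simpa using hderiv.2

lemma memLp_div_one_add_sq_rpow (hu1 : AEMeasurable u1 μ) (hu2 : MemLp u2 2 μ) {s : ℝ}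
    (hs : 0 ≤ s) : MemLp (fun x => u2 x / (1 + u1 x ^ 2) ^ s) 2 μ :=
  hu2.of_le (hu2.aemeasurable.div (by fun_prop)).aestronglyMeasurable
    (ae_of_all _ fun x => abs_div_one_add_sq_rpow_le _ _ hs)

lemma integral_elasticDensityDeriv_eq (hu1 : AEMeasurable u1 μ) (hφ1 : AEMeasurable φ1 μ)
    (hu2 : MemLp u2 2 μ) (hφ2 : MemLp φ2 2 μ) (hM : ∀ᵐ x ∂μ, |φ1 x| ≤ M) :
    ∫ x, elasticDensityDeriv (u1 x) (u2 x) (φ1 x) (φ2 x) ∂μ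
      = 2 * ∫ x, u2 x * φ2 x / (1 + u1 x ^ 2) ^ ((5:ℝ)/2) ∂μ
        - 5 * ∫ x, u2 x ^ 2 * u1 x * φ1 x / (1 + u1 x ^ 2) ^ ((7:ℝ)/2) ∂μ := by
  have hfirst : Integrable (fun x => u2 x * φ2 x / (1 + u1 x ^ 2) ^ ((5:ℝ)/2)) μ := by
    simpa only [Pi.mul_def, mul_div_right_comm] using
      (memLp_div_one_add_sq_rpow hu1 hu2 (s := (5:ℝ)/2) (by norm_num)).integrable_mul hφ2
  have hsecond : Integrable (fun x => u2 x ^ 2 * u1 x * φ1 x / (1 + u1 x ^ 2) ^ ((7:ℝ)/2)) μ := by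
    have hu2' := hu2.aemeasurable
    refine ((integrable_elasticDensity hu1 hu2).const_mul (M / 2)).mono'
      (by fun_prop : AEMeasurable _ μ).aestronglyMeasurable ?_
    filter_upwards [hM] with x hx
    rw [Real.norm_eq_abs]
    refine (abs_sq_mul_mul_div_one_add_sq_rpow_le _ _ _).trans ?_
    gcongr
    exact elasticDensity_nonneg _ _
  rw [← integral_const_mul, ← integral_const_mul, ← integral_sub (hfirst.const_mul 2)
    (hsecond.const_mul 5)]
  rfl

lemma abs_integral_elasticDensityDeriv_le (hu1 : AEMeasurable u1 μ)
    (hu2 : MemLp u2 2 μ) (hφ2 : MemLp φ2 2 μ) (hM : ∀ᵐ x ∂μ, |φ1 x| ≤ M) :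
    |∫ x, elasticDensityDeriv (u1 x) (u2 x) (φ1 x) (φ2 x) ∂μ|
      ≤ 2 * √(∫ x, elasticDensity (u1 x) (u2 x) ∂μ) * √(∫ x, φ2 x ^ 2 ∂μ)
        + 5 / 2 * M * ∫ x, elasticDensity (u1 x) (u2 x) ∂μ := by
  set w : α → ℝ := fun x => u2 x / (1 + u1 x ^ 2) ^ ((5:ℝ)/2)
  have hw : MemLp w 2 μ := memLp_div_one_add_sq_rpow hu1 hu2 (by norm_num)
  have hρ := integrable_elasticDensity hu1 hu2
  have hwφ : Integrable (fun x => |w x * φ2 x|) μ := (hw.integrable_mul hφ2).abs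
  have hw2 : ∫ x, w x ^ 2 ∂μ ≤ ∫ x, elasticDensity (u1 x) (u2 x) ∂μ :=
    integral_mono hw.integrable_sq hρ fun x => sq_div_one_add_sq_rpow_le_elasticDensity _ _
  calc |∫ x, elasticDensityDeriv (u1 x) (u2 x) (φ1 x) (φ2 x) ∂μ|
      ≤ ∫ x, |elasticDensityDeriv (u1 x) (u2 x) (φ1 x) (φ2 x)| ∂μ :=
        abs_integral_le_integral_abs
    _ ≤ ∫ x, (2 * |w x * φ2 x| + 5 / 2 * M * elasticDensity (u1 x) (u2 x)) ∂μ := by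
        refine integral_mono_of_nonneg (ae_of_all _ fun x => abs_nonneg _)
          ((hwφ.const_mul 2).add (hρ.const_mul _)) ?_
        filter_upwards [hM] with x hx
        refine (abs_elasticDensityDeriv_le _ _ _ _).trans ?_
        gcongr
        exact elasticDensity_nonneg _ _
    _ = 2 * ∫ x, |w x * φ2 x| ∂μ + 5 / 2 * M * ∫ x, elasticDensity (u1 x) (u2 x) ∂μ := by
        rw [integral_add (hwφ.const_mul 2) (hρ.const_mul _), integral_const_mul,
          integral_const_mul]
    _ ≤ 2 * (√(∫ x, w x ^ 2 ∂μ) * √(∫ x, φ2 x ^ 2 ∂μ))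
          + 5 / 2 * M * ∫ x, elasticDensity (u1 x) (u2 x) ∂μ := by
        gcongr
        exact integral_abs_mul_le_sqrt_mul_sqrt hw hφ2
    _ ≤ _ := by
        rw [← mul_assoc]
        gcongr

end

lemma MemH.continuousOn_deriv {u u1 u2 : ℝ → ℝ} (h : MemH u u1 u2) :
    ContinuousOn u1 (Icc 0 1) := by
  have hprim := intervalIntegral.continuousOn_primitive_interval (a := (0:ℝ)) (b := 1)
    (by rw [uIcc_of_le zero_le_one]; exact h.2.2.1)
  rw [uIcc_of_le zero_le_one] at hprim
  exact (continuousOn_const.add hprim).congr h.2.1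

lemma MemH.aemeasurable_deriv {u u1 u2 : ℝ → ℝ} (h : MemH u u1 u2) :
    AEMeasurable u1 (volume.restrict (Ioc 0 1)) :=
  (h.continuousOn_deriv.aemeasurable measurableSet_Icc).mono_measure
    (Measure.restrict_mono Ioc_subset_Icc_self le_rfl)

lemma MemH.memLp_two_secondDeriv {u u1 u2 : ℝ → ℝ} (h : MemH u u1 u2) :
    MemLp u2 2 (volume.restrict (Ioc 0 1)) :=
  (memLp_two_iff_integrable_sq (h.2.2.1.mono_set Ioc_subset_Icc_self).aestronglyMeasurable).mpr
    (h.2.2.2.1.mono_set Ioc_subset_Icc_self)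

lemma elE_eq_integral (u1 u2 : ℝ → ℝ) :
    elE u1 u2 = ∫ x in Ioc 0 1, elasticDensity (u1 x) (u2 x) :=
  intervalIntegral.integral_of_le zero_le_one

lemma Hnorm_eq_sqrt_integral (u2 : ℝ → ℝ) : Hnorm u2 = √(∫ x in Ioc 0 1, u2 x ^ 2) := by
  rw [Hnorm, intervalIntegral.integral_of_le zero_le_one]

lemma elDE_eq_integral {u u1 u2 φ φ1 φ2 : ℝ → ℝ} {M : ℝ} (hu : MemH u u1 u2) (hφ : MemH φ φ1 φ2)
    (hM : ∀ᵐ x ∂(volume.restrict (Ioc 0 1)), |φ1 x| ≤ M) :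
    elDE u1 u2 φ1 φ2 = ∫ x in Ioc 0 1, elasticDensityDeriv (u1 x) (u2 x) (φ1 x) (φ2 x) := by
  rw [integral_elasticDensityDeriv_eq hu.aemeasurable_deriv hφ.aemeasurable_deriv
    hu.memLp_two_secondDeriv hφ.memLp_two_secondDeriv hM, elDE,
    intervalIntegral.integral_of_le zero_le_one, intervalIntegral.integral_of_le zero_le_one]

/-- **Gradient formula and estimate.** For all `u, φ ∈ H` the derivative of the elastic
energy at `u` in direction `φ` (i.e. `(∇E(u), φ)`) equals
`2∫₀¹ u''φ''/(1+u'²)^{5/2} - 5∫₀¹ u''²u'φ'/(1+u'²)^{7/2}`; in particular, if `C_P` is an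
embedding constant of `H ↪ W^{1,∞}(0,1)`, then
`‖∇E(u)‖ ≤ (1 + (5/2)C_P)·E(u) + 1`, i.e. `|(∇E(u),φ)| ≤ ((1 + (5/2)C_P)·E(u) + 1)·‖φ‖`
for all `φ ∈ H`. -/
theorem elastic_gradient_formula_and_estimate
    (Cp : ℝ)
    (hCp : ∀ w w1 w2 : ℝ → ℝ, MemH w w1 w2 →
      ∀ x ∈ Icc (0:ℝ) 1, |w x| ≤ Cp * Hnorm w2 ∧ |w1 x| ≤ Cp * Hnorm w2) :
    ∀ u u1 u2 : ℝ → ℝ, MemH u u1 u2 → ∀ φ φ1 φ2 : ℝ → ℝ, MemH φ φ1 φ2 →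
      HasDerivAt (fun ε : ℝ =>
          elE (fun x => u1 x + ε * φ1 x) (fun x => u2 x + ε * φ2 x))
        (elDE u1 u2 φ1 φ2) 0 ∧
      |elDE u1 u2 φ1 φ2| ≤ ((1 + (5/2) * Cp) * elE u1 u2 + 1) * Hnorm φ2 := by
  intro u u1 u2 hu φ φ1 φ2 hφ
  have hM : ∀ᵐ x ∂(volume.restrict (Ioc 0 1)), |φ1 x| ≤ Cp * Hnorm φ2 :=
    ae_restrict_of_forall_mem measurableSet_Ioc fun x hx =>
      (hCp φ φ1 φ2 hφ x (Ioc_subset_Icc_self hx)).2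
  rw [elDE_eq_integral hu hφ hM]
  constructor
  · simpa only [elE_eq_integral] using hasDerivAt_integral_elasticDensity hu.aemeasurable_deriv
      hφ.aemeasurable_deriv hu.memLp_two_secondDeriv hφ.memLp_two_secondDeriv hM
  · have hE : 0 ≤ elE u1 u2 := by
      rw [elE_eq_integral]; exact integral_nonneg fun x => elasticDensity_nonneg _ _
    have hamgm : 2 * √(elE u1 u2) ≤ elE u1 u2 + 1 := by
      nlinarith [Real.sq_sqrt hE, sq_nonneg (√(elE u1 u2) - 1)]
    have hbound := abs_integral_elasticDensityDeriv_le hu.aemeasurable_deriv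
      hu.memLp_two_secondDeriv hφ.memLp_two_secondDeriv hM
    rw [← elE_eq_integral, ← Hnorm_eq_sqrt_integral] at hbound
    calc _ ≤ 2 * √(elE u1 u2) * Hnorm φ2 + 5 / 2 * (Cp * Hnorm φ2) * elE u1 u2 := hbound
      _ ≤ (elE u1 u2 + 1) * Hnorm φ2 + 5 / 2 * (Cp * Hnorm φ2) * elE u1 u2 := by
        gcongr
        exact Real.sqrt_nonneg _
      _ = ((1 + (5/2) * Cp) * elE u1 u2 + 1) * Hnorm φ2 := by ring
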